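/- Any directed graph G of order n in which every weakly connected component has order at least 4 has a Γ-irregular labeling for every finite abelian group Γ such that |Γ| ≥ 2n + 1. -/

import Mathlib

/-!
Labeling the arc `ab` by `g` induces `g` at `a` and `-g` at `b`; chaining such labelings along
weak paths shows that every vertex map whose values sum to zero on each weakly connected
component is induced by some labeling. So it suffices to give the vertices distinct values,
summing to zero on every component. Choose them component by component: for a component of
size `m ≥ 3`, with `k` values already used and `2(k + m) < |Γ|`, take fresh values freely and
finish with a pair `x, c - x`. Such a pair exists unless `c` has many halves, which can only
happen when `Γ` has at least five elements `x` with `2x = 0`; then `2Γ` has index at least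
five, and the last free value can be chosen to push `c` out of `2Γ`.
-/

open Finset

/-- Weak reachability in a digraph: the reflexive-transitive closure of the
symmetrized adjacency relation. The weakly connected component of `x` is
`{y | WReach Adj x y}`. -/
def WReach {V : Type*} (Adj : V → V → Prop) : V → V → Prop :=
  Relation.ReflTransGen (fun a b => Adj a b ∨ Adj b a)

/-- The induced vertex map `φ_ψ` of an arc labeling `ψ`:
`φ_ψ(x) = Σ_{y ∈ N⁺(x)} ψ(x,y) − Σ_{y ∈ N⁻(x)} ψ(y,x)`. -/
def vertexSum {V Γ : Type*} [Fintype V] [AddCommGroup Γ]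
    (Adj : V → V → Prop) [DecidableRel Adj] (ψ : V → V → Γ) (x : V) : Γ :=
  (∑ y ∈ univ.filter (fun y => Adj x y), ψ x y)
    - (∑ y ∈ univ.filter (fun y => Adj y x), ψ y x)

/-- `G` is realizable in `Γ`: there is a `Γ`-irregular arc labeling, i.e. one whose
induced vertex map is injective. -/
def Realizable {V : Type*} [Fintype V] (Adj : V → V → Prop) [DecidableRel Adj]
    (Γ : Type*) [AddCommGroup Γ] : Prop :=
  ∃ ψ : V → V → Γ, Function.Injective (vertexSum Adj ψ)

section
variable {G H : Type*} [AddGroup G] [AddGroup H] [Fintype G] [DecidableEq H]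

lemma AddMonoidHom.card_filter_eq_le (f : G →+ H) (c : H) :
    #{x | f x = c} ≤ #{x | f x = 0} := by
  obtain ⟨x₀, hx₀⟩ | hc := em (∃ x₀, f x₀ = c)
  · refine card_le_card_of_injOn (· - x₀) (fun x hx => ?_) (sub_left_injective.injOn)
    simp_all
  · simp_all

lemma AddMonoidHom.card_image_mul_card_filter_eq_zero (f : G →+ H) :
    #(univ.image f) * #{x | f x = 0} = Fintype.card G := by
  have := f.ker.card_mul_index
  rw [AddSubgroup.index_ker] at this
  rw [← Nat.card_eq_fintype_card, ← this, mul_comm]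
  congr 1
  · rw [← Nat.card_eq_finsetCard]; simp
  · rw [← Nat.card_eq_finsetCard]; simp

end

section
variable {Γ : Type*} [AddCommGroup Γ] [Fintype Γ] [DecidableEq Γ]

lemma exists_insert_pair_sum_eq_zero (S F : Finset Γ) (hFS : Disjoint F S)
    (h : 2 * #(S ∪ F) + #{x | 2 • x = -∑ y ∈ F, y} < Fintype.card Γ) :
    ∃ T : Finset Γ, #T = #F + 2 ∧ Disjoint T S ∧ ∑ x ∈ T, x = 0 := by
  set B := S ∪ F
  set c := -∑ y ∈ F, y
  set bad := (B ∪ B.image (c - ·)) ∪ ({x | 2 • x = c} : Finset Γ)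
  have hbad : #bad < Fintype.card Γ := by
    refine (card_union_le _ _).trans_lt ?_
    have := card_union_le B (B.image (c - ·))
    have := card_image_le (s := B) (f := (c - ·))
    omega
  obtain ⟨x, hx⟩ : badᶜ.Nonempty := by rw [← card_pos, card_compl]; omega
  simp only [bad, mem_compl, mem_union, mem_image, not_or, not_exists, not_and] at hx
  obtain ⟨⟨hxB, hcx⟩, hhalf⟩ := hx
  have hyB : c - x ∉ B := fun hy => hcx _ hy (sub_sub_cancel c x)
  have hxy : x ≠ c - x := fun he =>
    hhalf (mem_filter.mpr ⟨mem_univ x, by rw [two_nsmul]; nth_rw 2 [he]; abel⟩)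
  have hxF : x ∉ F := fun hxF => hxB (mem_union_right _ hxF)
  have hyF : c - x ∉ F := fun hyF => hyB (mem_union_right _ hyF)
  refine ⟨insert x (insert (c - x) F), ?_, ?_, ?_⟩
  · rw [card_insert_of_notMem (by simp [hxy, hxF]), card_insert_of_notMem hyF]
  · simp only [disjoint_insert_left]
    exact ⟨fun h => hxB (mem_union_left _ h), fun h => hyB (mem_union_left _ h), hFS⟩
  · rw [sum_insert (by simp [hxy, hxF]), sum_insert hyF]
    simp only [c]; abel

lemma exists_card_eq_disjoint_sum_eq_zero (S : Finset Γ) {m : ℕ} (hm : 3 ≤ m)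
    (h : 2 * (#S + m) + 1 ≤ Fintype.card Γ) :
    ∃ T : Finset Γ, #T = m ∧ Disjoint T S ∧ ∑ x ∈ T, x = 0 := by
  let double : Γ →+ Γ := nsmulAddMonoidHom 2
  have hdouble (x : Γ) : double x = 2 • x := rfl
  by_cases htors : #{x : Γ | 2 • x = 0} ≤ 4
  · obtain ⟨F, hFS, hF⟩ := exists_subset_card_eq (s := Sᶜ) (n := m - 2)
      (by rw [card_compl]; omega)
    have hc := double.card_filter_eq_le (-∑ y ∈ F, y)
    simp only [hdouble] at hc
    have := card_union_le S F
    obtain ⟨T, hT, hTS, hTsum⟩ := exists_insert_pair_sum_eq_zero S F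
      (subset_compl_iff_disjoint_right.mp hFS) (by omega)
    exact ⟨T, by omega, hTS, hTsum⟩
  · -- many elements of order 2 make the image `2Γ` small; choose the last free element `z`
    -- so that the remaining pair must sum to an element outside `2Γ`
    set D := univ.image double
    have hD5 : 5 * #D ≤ Fintype.card Γ := by
      rw [← double.card_image_mul_card_filter_eq_zero, mul_comm]
      simp only [hdouble]
      gcongr
      omega
    obtain ⟨F, hFS, hF⟩ := exists_subset_card_eq (s := Sᶜ) (n := m - 3)
      (by rw [card_compl]; omega)
    set s := ∑ y ∈ F, y
    set bad := (S ∪ F) ∪ D.image (-s - ·)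
    have hbad : #bad < Fintype.card Γ := by
      refine (card_union_le _ _).trans_lt ?_
      have := card_union_le S F
      have := card_image_le (s := D) (f := (-s - ·))
      omega
    obtain ⟨z, hz⟩ : badᶜ.Nonempty := by rw [← card_pos, card_compl]; omega
    simp only [bad, mem_compl, mem_union, not_or] at hz
    obtain ⟨⟨hzS, hzF⟩, hzD⟩ := hz
    have hhalf : #{x | 2 • x = -∑ y ∈ insert z F, y} = 0 := by
      rw [card_eq_zero, filter_eq_empty_iff]
      rintro x - hx
      refine hzD (mem_image.mpr ⟨double x, mem_image_of_mem _ (mem_univ x), ?_⟩)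
      rw [hdouble, hx, sum_insert hzF]; abel
    have := card_union_le S (insert z F)
    obtain ⟨T, hT, hTS, hTsum⟩ := exists_insert_pair_sum_eq_zero S (insert z F)
      (disjoint_insert_left.mpr ⟨hzS, subset_compl_iff_disjoint_right.mp hFS⟩)
      (by rw [card_insert_of_notMem hzF] at this; omega)
    exact ⟨T, by rw [hT, card_insert_of_notMem hzF]; omega, hTS, hTsum⟩

lemma exists_injOn_forall_sum_eq_zero {V : Type*} [DecidableEq V] (P : Finset (Finset V))
    (hP : (P : Set (Finset V)).PairwiseDisjoint id) (hcard : ∀ C ∈ P, 3 ≤ #C)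
    (hΓ : 2 * #(P.sup id) + 1 ≤ Fintype.card Γ) :
    ∃ f : V → Γ, Set.InjOn f (P.sup id : Finset V) ∧ ∀ C ∈ P, ∑ v ∈ C, f v = 0 := by
  induction P using Finset.induction_on with
  | empty => exact ⟨0, by simp, by simp⟩
  | insert C Q hCQ ih =>
    rw [coe_insert, Set.pairwiseDisjoint_insert] at hP
    set U := Q.sup id
    have hCU : Disjoint C U := Finset.disjoint_sup_right.mpr fun D hD =>
      hP.2 D hD (ne_of_mem_of_not_mem hD hCQ).symm
    rw [sup_insert, id, sup_eq_union] at hΓ ⊢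
    rw [card_union_of_disjoint hCU] at hΓ
    obtain ⟨f', hf'inj, hf'sum⟩ :=
      ih hP.1 (fun D hD => hcard D (mem_insert_of_mem hD)) (by omega)
    obtain ⟨T, hT, hTS, hTsum⟩ := exists_card_eq_disjoint_sum_eq_zero (U.image f')
      (hcard C (mem_insert_self C Q)) (by have := card_image_le (s := U) (f := f'); omega)
    obtain ⟨g, hg⟩ := C.finite_toSet.exists_bijOn_of_encard_eq (t := (T : Set Γ))
      (by simp [hT])
    have hfC : ∀ v ∈ C, C.piecewise g f' v = g v := fun v hv => piecewise_eq_of_mem _ _ _ hv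
    have hfU : ∀ v ∈ U, C.piecewise g f' v = f' v := fun v hv =>
      piecewise_eq_of_notMem _ _ _ (disjoint_right.mp hCU hv)
    refine ⟨C.piecewise g f', ?_, ?_⟩
    · rw [coe_union, Set.injOn_union (disjoint_coe.mpr hCU)]
      refine ⟨hg.injOn.congr fun v hv => (hfC v hv).symm,
        hf'inj.congr fun v hv => (hfU v hv).symm, fun v hv w hw hvw => ?_⟩
      rw [hfC v hv, hfU w hw] at hvw
      exact disjoint_left.mp hTS (hg.mapsTo hv) (hvw ▸ mem_image_of_mem f' hw)
    · intro D hD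
      rcases mem_insert.mp hD with rfl | hDQ
      · rw [sum_congr rfl hfC, ← hTsum]
        exact sum_nbij g (fun v hv => hg.mapsTo hv) hg.injOn hg.surjOn fun _ _ => rfl
      · have hDU : D ⊆ U := le_sup (f := id) hDQ
        rw [sum_congr rfl fun v hv => hfU v (hDU hv)]
        exact hf'sum D hDQ
end

namespace WReach
variable {V : Type*} {Adj : V → V → Prop}

lemma symm {x y : V} (h : WReach Adj x y) : WReach Adj y x := by
  induction h with
  | refl => exact .refl
  | tail _ hbc ih => exact .head hbc.symm ih

variable (Adj) in
def setoid : Setoid V :=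
  ⟨WReach Adj, ⟨fun _ => .refl, symm, .trans⟩⟩

end WReach

open Classical in
noncomputable def weakComponent {V : Type*} [Fintype V] (Adj : V → V → Prop) (x : V) :
    Finset V :=
  {y | WReach Adj x y}

@[simp]
lemma mem_weakComponent {V : Type*} [Fintype V] {Adj : V → V → Prop} {x y : V} :
    y ∈ weakComponent Adj x ↔ WReach Adj x y := by
  simp [weakComponent]

lemma card_weakComponent {V : Type*} [Fintype V] (Adj : V → V → Prop) (x : V) :
    #(weakComponent Adj x) = {y | WReach Adj x y}.ncard := by
  rw [← Set.ncard_coe_finset]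
  congr 1
  ext y
  simp

lemma pairwiseDisjoint_weakComponent {V : Type*} [Fintype V] (Adj : V → V → Prop) :
    (Set.range (weakComponent Adj)).PairwiseDisjoint id := by
  rintro _ ⟨x, rfl⟩ _ ⟨y, rfl⟩ hne
  refine disjoint_left.mpr fun z hxz hyz => hne ?_
  have hxy : WReach Adj x y := (mem_weakComponent.mp hxz).trans (mem_weakComponent.mp hyz).symm
  ext w
  simp only [mem_weakComponent]
  exact ⟨hxy.symm.trans, hxy.trans⟩

section
variable {V Γ : Type*} [Fintype V] [AddCommGroup Γ] (Adj : V → V → Prop) [DecidableRel Adj]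

def vertexSumHom : (V → V → Γ) →+ (V → Γ) where
  toFun := vertexSum Adj
  map_zero' := by ext; simp [vertexSum]
  map_add' ψ χ := by ext; simp only [vertexSum, Pi.add_apply, sum_add_distrib]; abel

variable [DecidableEq V]

lemma vertexSum_ite_arc {a b : V} (hab : Adj a b) (g : Γ) :
    vertexSum Adj (fun x y => if x = a ∧ y = b then g else 0)
      = Pi.single a g - Pi.single b g := by
  ext v
  by_cases hva : v = a <;> by_cases hvb : v = b <;> simp_all [vertexSum]

lemma single_sub_single_mem_range_vertexSumHom {a b : V} (h : WReach Adj a b) (g : Γ) :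
    Pi.single a g - Pi.single b g ∈ (vertexSumHom (Γ := Γ) Adj).range := by
  induction h with
  | refl => simp
  | @tail b c _ hbc ih =>
    have hstep : Pi.single b g - Pi.single c g ∈ (vertexSumHom (Γ := Γ) Adj).range := by
      rcases hbc with hbc | hcb
      · exact ⟨_, vertexSum_ite_arc Adj hbc g⟩
      · rw [← neg_sub]
        exact neg_mem ⟨_, vertexSum_ite_arc Adj hcb g⟩
    simpa using add_mem ih hstep

lemma mem_range_vertexSumHom_of_forall_sum_eq_zero (t : V → Γ)
    (ht : ∀ x, ∑ y ∈ weakComponent Adj x, t y = 0) :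
    t ∈ (vertexSumHom (Γ := Γ) Adj).range := by
  classical
  let s := WReach.setoid Adj
  have hfiber (q : Quotient s) : ∑ v with ⟦v⟧ = q, t v = 0 := by
    rw [← ht q.out]
    congr 1
    ext v
    rw [mem_filter, mem_weakComponent, Quotient.mk_eq_iff_out]
    exact ⟨fun h => WReach.symm h.2, fun h => ⟨mem_univ v, WReach.symm h⟩⟩
  -- reroute the value at each vertex to the representative of its component
  have hsplit : t = ∑ v, (Pi.single v (t v) - Pi.single (⟦v⟧ : Quotient s).out (t v))
      + ∑ q : Quotient s, Pi.single q.out (∑ v with ⟦v⟧ = q, t v) := by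
    have hregroup : ∑ q : Quotient s, Pi.single q.out (∑ v with ⟦v⟧ = q, t v)
        = ∑ v, (Pi.single (⟦v⟧ : Quotient s).out (t v) : V → Γ) := by
      rw [← sum_fiberwise univ (fun v => (⟦v⟧ : Quotient s))]
      refine sum_congr rfl fun q _ => ?_
      rw [← AddMonoidHom.single_apply, map_sum]
      exact sum_congr rfl fun v hv => by rw [(mem_filter.mp hv).2, AddMonoidHom.single_apply]
    rw [hregroup, sum_sub_distrib, sub_add_cancel, univ_sum_single]
  rw [hsplit]
  simp only [hfiber, Pi.single_zero, sum_const_zero, add_zero]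
  exact sum_mem fun v _ =>
    single_sub_single_mem_range_vertexSumHom Adj (Quotient.mk_out (s := s) v).symm _
end

/-- Theorem (Cichacz–Suchan): any digraph of order `n` with all weakly connected components
of order at least 4 has a `Γ`-irregular labeling whenever `|Γ| ≥ 2n + 1`. -/
theorem stmt_5 {V Γ : Type*} [Fintype V] [AddCommGroup Γ] [Fintype Γ]
    (Adj : V → V → Prop) [DecidableRel Adj]
    (hcomp : ∀ x : V, 4 ≤ {y | WReach Adj x y}.ncard)
    (hΓ : 2 * Fintype.card V + 1 ≤ Fintype.card Γ) :
    ∃ ψ : V → V → Γ, Function.Injective (vertexSum Adj ψ) := by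
  classical
  let P := univ.image (weakComponent Adj)
  have hcover : P.sup id = univ := eq_univ_of_forall fun x =>
    mem_sup.mpr ⟨_, mem_image_of_mem _ (mem_univ x), mem_weakComponent.mpr .refl⟩
  obtain ⟨f, hf, hsum⟩ := exists_injOn_forall_sum_eq_zero (Γ := Γ) P
    ((pairwiseDisjoint_weakComponent Adj).subset (by simp [P]))
    (forall_mem_image.mpr fun x _ =>
      (card_weakComponent Adj x).symm ▸ Nat.le_of_succ_le (hcomp x))
    (by rw [hcover, card_univ]; exact hΓ)
  obtain ⟨ψ, hψ⟩ := mem_range_vertexSumHom_of_forall_sum_eq_zero Adj f fun x =>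
    hsum _ (mem_image_of_mem _ (mem_univ x))
  rw [hcover, coe_univ, Set.injOn_univ, ← hψ] at hf
  exact ⟨ψ, hf⟩
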